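/- If f = u + iv solves the Beltrami equation ∂̄f = μ conj(∂f) with real-valued μ = (1−σ)/(1+σ), ‖μ‖_∞ < 1, then the real part u satisfies the conductivity equation ∇·(σ∇u) = 0 and the imaginary part v satisfies ∇·((1/σ)∇v) = 0, where σ = (1−μ)/(1+μ). -/

import Mathlib

open Complex


lemma re_fderiv' (f : ℂ → ℂ) (hf : Differentiable ℝ f) (z w : ℂ) :
    fderiv ℝ (fun x => (f x).re) z w = (fderiv ℝ f z w).re := by
  have : fderiv ℝ (fun x => (f x).re) z = Complex.reCLM.comp (fderiv ℝ f z) :=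
    (Complex.reCLM.hasFDerivAt.comp z (hf z).hasFDerivAt).fderiv
  rw [this]; rfl

lemma im_fderiv' (f : ℂ → ℂ) (hf : Differentiable ℝ f) (z w : ℂ) :
    fderiv ℝ (fun x => (f x).im) z w = (fderiv ℝ f z w).im := by
  have : fderiv ℝ (fun x => (f x).im) z = Complex.imCLM.comp (fderiv ℝ f z) :=
    (Complex.imCLM.hasFDerivAt.comp z (hf z).hasFDerivAt).fderiv
  rw [this]; rfl

lemma deriv_dir (g : ℂ → ℝ) (hg : ContDiff ℝ 2 g) (z d e : ℂ) :
    fderiv ℝ (fun w => fderiv ℝ g w d) z e = fderiv ℝ (fderiv ℝ g) z e d := by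
  have hg' : Differentiable ℝ (fderiv ℝ g) :=
    (hg.fderiv_right (m := 1) (by norm_num)).differentiable (by norm_num)
  have h := ((hg' z).hasFDerivAt.clm_apply (hasFDerivAt_const d z)).fderiv
  rw [h]; simp

lemma symm2 (g : ℂ → ℝ) (hg : ContDiff ℝ 2 g) (z : ℂ) :
    fderiv ℝ (fderiv ℝ g) z 1 Complex.I = fderiv ℝ (fderiv ℝ g) z Complex.I 1 := by
  have hg' : Differentiable ℝ (fderiv ℝ g) :=
    (hg.fderiv_right (m := 1) (by norm_num)).differentiable (by norm_num)
  exact second_derivative_symmetric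
    (fun y => (hg.differentiable (by norm_num) y).hasFDerivAt)
    (hg' z).hasFDerivAt 1 Complex.I

/-- If f = u + iv solves the Beltrami equation ∂̄f = μ conj(∂f)
with real dilatation μ = (1−σ)/(1+σ), ‖μ‖_∞ < 1, then u = Re f satisfies
∇·(σ∇u) = 0 and v = Im f satisfies ∇·((1/σ)∇v) = 0, where σ = (1−μ)/(1+μ).
Wirtinger derivatives and the divergence are expressed through real Fréchet
derivatives along the directions 1 and i in ℂ ≅ ℝ². -/
theorem stmt_4
    (f : ℂ → ℂ) (μ σ : ℂ → ℝ)
    (hf : ContDiff ℝ 2 f) (hμ : ContDiff ℝ 1 μ)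
    (hμell : ∃ κ : ℝ, κ < 1 ∧ ∀ z, |μ z| ≤ κ)
    (hσ : ∀ z, σ z = (1 - μ z) / (1 + μ z))
    -- the Beltrami equation ∂̄_z f = μ · conj(∂_z f)
    (hBeltrami : ∀ z : ℂ,
      (1 / 2 : ℂ) * (fderiv ℝ f z 1 + Complex.I * fderiv ℝ f z Complex.I)
        = (μ z : ℂ) *
          (starRingEnd ℂ)
            ((1 / 2 : ℂ) * (fderiv ℝ f z 1 - Complex.I * fderiv ℝ f z Complex.I)))
    (u v : ℂ → ℝ) (hu : u = fun z => (f z).re) (hv : v = fun z => (f z).im) :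
    (∀ z : ℂ,
      fderiv ℝ (fun w => σ w * fderiv ℝ u w 1) z 1
        + fderiv ℝ (fun w => σ w * fderiv ℝ u w Complex.I) z Complex.I = 0) ∧
    (∀ z : ℂ,
      fderiv ℝ (fun w => (σ w)⁻¹ * fderiv ℝ v w 1) z 1
        + fderiv ℝ (fun w => (σ w)⁻¹ * fderiv ℝ v w Complex.I) z Complex.I = 0) := by

  obtain ⟨κ, hκ, hb⟩ := hμell
  have hdf : Differentiable ℝ f := hf.differentiable (by norm_num)
  have hμrange : ∀ z, -1 < μ z ∧ μ z < 1 := fun z => by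
    have := hb z
    constructor <;> [nlinarith [abs_le.1 this]; nlinarith [abs_le.1 this]]
  have h1p : ∀ z, (0:ℝ) < 1 + μ z := fun z => by linarith [(hμrange z).1]
  have h1m : ∀ z, (0:ℝ) < 1 - μ z := fun z => by linarith [(hμrange z).2]
  have hσpos : ∀ z, 0 < σ z := fun z => by
    rw [hσ z]; exact div_pos (h1m z) (h1p z)
  -- extract real and imaginary equations from Beltrami
  have key : ∀ z, σ z * (fderiv ℝ f z 1).re = (fderiv ℝ f z Complex.I).im ∧
      σ z * (fderiv ℝ f z Complex.I).re = -(fderiv ℝ f z 1).im := fun z => by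
    have h := hBeltrami z
    set a := fderiv ℝ f z 1
    set b := fderiv ℝ f z Complex.I
    rw [Complex.ext_iff] at h
    obtain ⟨hre, him⟩ := h
    simp [Complex.mul_re, Complex.mul_im, Complex.add_re, Complex.add_im,
      Complex.sub_re, Complex.sub_im, Complex.I_re, Complex.I_im,
      Complex.conj_re, Complex.conj_im, Complex.ofReal_re, Complex.ofReal_im,
      Complex.div_re, Complex.div_im, Complex.one_re, Complex.one_im,
      Complex.normSq] at hre him
    have hne := (h1p z).ne'
    constructor
    · rw [hσ z]; field_simp; nlinarith [hre, him]
    · rw [hσ z]; field_simp; nlinarith [hre, him]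
  subst hu hv
  have hcu : ContDiff ℝ 2 (fun z => (f z).re) :=
    (Complex.reCLM.contDiff (n := 2)).comp hf
  have hcv : ContDiff ℝ 2 (fun z => (f z).im) :=
    (Complex.imCLM.contDiff (n := 2)).comp hf
  constructor
  · intro z
    have e1 : (fun w => σ w * fderiv ℝ (fun z => (f z).re) w 1)
        = (fun w => fderiv ℝ (fun z => (f z).im) w Complex.I) := funext fun w => by
      rw [re_fderiv' f hdf, im_fderiv' f hdf]; exact (key w).1
    have e2 : (fun w => σ w * fderiv ℝ (fun z => (f z).re) w Complex.I)
        = (fun w => -(fderiv ℝ (fun z => (f z).im) w 1)) := funext fun w => by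
      rw [re_fderiv' f hdf, im_fderiv' f hdf]; exact (key w).2
    rw [e1, e2]
    have : fderiv ℝ (fun w => -(fderiv ℝ (fun z => (f z).im) w 1)) z
        = -(fderiv ℝ (fun w => fderiv ℝ (fun z => (f z).im) w 1) z) := fderiv_neg
    rw [this, ContinuousLinearMap.neg_apply, deriv_dir _ hcv, deriv_dir _ hcv,
      symm2 _ hcv]
    ring
  · intro z
    have e1 : (fun w => (σ w)⁻¹ * fderiv ℝ (fun z => (f z).im) w 1)
        = (fun w => -(fderiv ℝ (fun z => (f z).re) w Complex.I)) := funext fun w => by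
      rw [re_fderiv' f hdf, im_fderiv' f hdf]
      have := (key w).2
      have hne := (hσpos w).ne'
      field_simp
      linarith [this]
    have e2 : (fun w => (σ w)⁻¹ * fderiv ℝ (fun z => (f z).im) w Complex.I)
        = (fun w => fderiv ℝ (fun z => (f z).re) w 1) := funext fun w => by
      rw [re_fderiv' f hdf, im_fderiv' f hdf]
      have := (key w).1
      have hne := (hσpos w).ne'
      field_simp
      linarith [this]
    rw [e1, e2]
    have : fderiv ℝ (fun w => -(fderiv ℝ (fun z => (f z).re) w Complex.I)) z
        = -(fderiv ℝ (fun w => fderiv ℝ (fun z => (f z).re) w Complex.I) z) := fderiv_neg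
    rw [this, ContinuousLinearMap.neg_apply, deriv_dir _ hcu, deriv_dir _ hcu,
      symm2 _ hcu]
    ring
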